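/- arXiv:1603.01641 — 7 statements merged into one kernel-verified Lean document; each statement's English description precedes it below -/
import Mathlib

section
/- Let H₁, …, H_{d+1} be closed half-spaces in ℝ^d, each with the origin on its boundary, such that the intersection of all H_i is exactly {0}. Then the outer unit normals n₁, …, n_{d+1} of these half-spaces satisfy: the origin lies in the relative interior of the convex hull of {n₁, …, n_{d+1}}. -/
/-!
If `0` were not an interior point of the convex hull of the normals, a supporting hyperplane
through `0` would give `u ≠ 0` with `⟪u, nᵢ⟫ ≤ 0` for all `i`, i.e. a nonzero point of `⋂ Hᵢ`.
So `0` even lies in the interior of the hull, not only in its relative interior.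
-/

open InnerProductSpace Set

section SupportingHyperplane

variable {E : Type*} [NormedAddCommGroup E] [InnerProductSpace ℝ E] [FiniteDimensional ℝ E]
  {A : Set E}

theorem Convex.exists_ne_zero_inner_eq_of_interior_eq_empty (hA : Convex ℝ A)
    (hint : interior A = ∅) {x : E} (hx : x ∈ A) :
    ∃ u ≠ 0, ∀ a ∈ A, ⟪u, a⟫_ℝ = ⟪u, x⟫_ℝ := by
  have hspan : vectorSpan ℝ A ≠ ⊤ := by
    rw [← direction_affineSpan, Ne, AffineSubspace.direction_eq_top_iff_of_nonempty
      ((affineSpan_nonempty ℝ).2 ⟨x, hx⟩), ← hA.interior_nonempty_iff_affineSpan_eq_top, hint]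
    exact not_nonempty_empty
  obtain ⟨u, hu, hu0⟩ := Submodule.exists_mem_ne_zero_of_ne_bot <|
    mt Submodule.orthogonal_eq_bot_iff.1 hspan
  refine ⟨u, hu0, fun a ha => ?_⟩
  rw [← sub_eq_zero, ← inner_sub_right]
  exact (Submodule.mem_orthogonal' _ _).1 hu _ (vsub_mem_vectorSpan ℝ ha hx)

theorem Convex.exists_ne_zero_inner_le_of_notMem_interior (hA : Convex ℝ A) (hne : A.Nonempty)
    {x : E} (hx : x ∉ interior A) : ∃ u ≠ 0, ∀ a ∈ A, ⟪u, a⟫_ℝ ≤ ⟪u, x⟫_ℝ := by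
  obtain hint | hint := (interior A).eq_empty_or_nonempty
  · obtain ⟨y, hy⟩ := hne
    obtain ⟨u, hu0, hu⟩ := hA.exists_ne_zero_inner_eq_of_interior_eq_empty hint hy
    -- `A` lies in a hyperplane, so one of its two normals works
    rcases le_total ⟪u, y⟫_ℝ ⟪u, x⟫_ℝ with hle | hle
    · exact ⟨u, hu0, fun a ha => (hu a ha).trans_le hle⟩
    · refine ⟨-u, neg_ne_zero.2 hu0, fun a ha => ?_⟩
      simpa only [inner_neg_left, neg_le_neg_iff, hu a ha] using hle
  · obtain ⟨f, hf0, hf⟩ := geometric_hahn_banach_of_nonempty_interior_point hA hx hint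
    refine ⟨(toDual ℝ E).symm f, by simpa using hf0, fun a ha => ?_⟩
    simpa only [toDual_symm_apply] using hf a ha

end SupportingHyperplane

theorem stmt0_general (d : ℕ) (n : Fin (d + 1) → EuclideanSpace ℝ (Fin d))
    (hgen : (⋂ i, {x : EuclideanSpace ℝ (Fin d) | (inner ℝ (n i) x : ℝ) ≤ 0}) = {0}) :
    (0 : EuclideanSpace ℝ (Fin d)) ∈
      intrinsicInterior ℝ (convexHull ℝ (Set.range n)) := by
  refine interior_subset_intrinsicInterior (by_contra fun h0 => ?_)
  obtain ⟨u, hu0, hu⟩ := (convex_convexHull ℝ (range n)).exists_ne_zero_inner_le_of_notMem_interior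
    ((range_nonempty n).mono (subset_convexHull ℝ _)) h0
  have hmem : u ∈ ⋂ i, {x | ⟪n i, x⟫_ℝ ≤ 0} := mem_iInter.2 fun i => by
    rw [mem_ofPred_eq, real_inner_comm, ← inner_zero_right u]
    exact hu (n i) (subset_convexHull ℝ _ (mem_range_self i))
  exact hu0 (by rwa [hgen, mem_singleton_iff] at hmem)

theorem stmt0 (d : ℕ) (n : Fin (d + 1) → EuclideanSpace ℝ (Fin d))
    (hunit : ∀ i, ‖n i‖ = 1)
    (hgen : (⋂ i, {x : EuclideanSpace ℝ (Fin d) | (inner ℝ (n i) x : ℝ) ≤ 0}) = {0}) :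
    (0 : EuclideanSpace ℝ (Fin d)) ∈
      intrinsicInterior ℝ (convexHull ℝ (Set.range n)) :=
  stmt0_general d n hgen
end

section
/- Let (H₁, …, H_{d+1}) be a generating (d+1)-tuple of half-spaces in a Euclidean d-space V, and define the corresponding simplicial cones Bᵢ = ⋂_{j ≠ i} Hⱼ. If points bᵢ ∈ relint Bᵢ are chosen for each i = 1, …, d+1, then conv{b₁, …, b_{d+1}} is a nondegenerate d-simplex and the origin lies in its relative interior. -/
/-!
Every `bⱼ` lies in the interior of the full-dimensional cone `Bⱼ`, so `⟪nₖ, bⱼ⟫ < 0` for `k ≠ j`.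
From these strict inequalities and `⋂ Hᵢ = {0}`, a vanishing combination `∑ cᵢ bᵢ = 0` with one
positive coefficient has all coefficients positive. Applied to weights summing to `0` this gives
affine independence, and applied to the barycentric coordinates of `0` it puts `0` in the interior
of the simplex.
-/

open Set Finset Module
open scoped InnerProductSpace

lemma intrinsicInterior_subset_interior_of_affineSpan_eq_top
    {E : Type*} [NormedAddCommGroup E] [NormedSpace ℝ E] {s : Set E}
    (hs : affineSpan ℝ s = ⊤) : intrinsicInterior ℝ s ⊆ interior s := by
  rintro x ⟨y, hy, rfl⟩
  have hopen : IsOpen (affineSpan ℝ s : Set E) := by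
    rw [hs]
    exact isOpen_univ
  exact interior_maximal (Set.image_subset_iff.2 fun z hz => interior_subset hz)
    (hopen.isOpenMap_subtype_val _ isOpen_interior) ⟨y, hy, rfl⟩

section Halfspaces

variable {E : Type*} [NormedAddCommGroup E] [InnerProductSpace ℝ E]

/-- At an interior point of `{x | ⟪v, x⟫ ≤ 0}` with `⟪v, b⟫ = 0`, the functional `⟪v, ·⟫` would
have a local maximum, so its derivative `v` would vanish. -/
lemma inner_neg_of_mem_interior_setOf_inner_nonpos {v b : E} (hv : v ≠ 0)
    (hb : b ∈ interior {x | ⟪v, x⟫_ℝ ≤ 0}) : ⟪v, b⟫_ℝ < 0 := by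
  have hle : ⟪v, b⟫_ℝ ≤ 0 := interior_subset (s := {x | ⟪v, x⟫_ℝ ≤ 0}) hb
  refine hle.lt_of_ne fun hvb => hv ?_
  have hmax : IsLocalMax (fun x => ⟪v, x⟫_ℝ) b :=
    Filter.mem_of_superset (mem_interior_iff_mem_nhds.1 hb) fun _ (hx : _ ≤ _) =>
      hx.trans_eq hvb.symm
  have hderiv : innerSL ℝ v = 0 := hmax.hasFDerivAt_eq_zero (innerSL ℝ v).hasFDerivAt
  simpa using congrArg (fun f => f v) hderiv

variable {ι : Type*} {n : ι → E}

lemma eq_zero_of_forall_ne_inner_eq_zero (hcone : ∀ x, (∀ i, ⟪n i, x⟫_ℝ ≤ 0) → x = 0)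
    {j : ι} {x : E} (hx : ∀ m ≠ j, ⟪n m, x⟫_ℝ = 0) : x = 0 := by
  classical
  rcases le_total ⟪n j, x⟫_ℝ 0 with hj | hj
  · exact hcone x fun m => if hm : m = j then hm ▸ hj else (hx m hm).le
  · refine neg_eq_zero.1 (hcone (-x) fun m => ?_)
    rw [inner_neg_right, neg_nonpos]
    exact if hm : m = j then hm ▸ hj else (hx m hm).ge

variable [FiniteDimensional ℝ E] [Fintype ι]

/-- The `finrank E` functionals `⟪n m, ·⟫`, `m ≠ j`, are jointly injective, hence jointly
surjective; a preimage of `(-1, …, -1)` is the required point. -/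
lemma exists_forall_ne_inner_neg (hcone : ∀ x, (∀ i, ⟪n i, x⟫_ℝ ≤ 0) → x = 0)
    (hcard : Fintype.card ι = finrank ℝ E + 1) (j : ι) :
    ∃ x : E, ∀ m ≠ j, ⟪n m, x⟫_ℝ < 0 := by
  classical
  let F : E →ₗ[ℝ] ({m // m ≠ j} → ℝ) := LinearMap.pi fun m => (innerSL ℝ (n m)).toLinearMap
  have hinj : Function.Injective F := by
    rw [← LinearMap.ker_eq_bot, LinearMap.ker_eq_bot']
    exact fun x hx => eq_zero_of_forall_ne_inner_eq_zero hcone fun m hm => congrFun hx ⟨m, hm⟩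
  have hdim : finrank ℝ E = finrank ℝ ({m // m ≠ j} → ℝ) := by
    rw [Module.finrank_fintype_fun_eq_card, Fintype.card_subtype_compl, Fintype.card_subtype_eq]
    omega
  obtain ⟨x, hx⟩ := (LinearMap.injective_iff_surjective_of_finrank_eq_finrank hdim).1 hinj
    fun _ => -1
  exact ⟨x, fun m hm => (congrFun hx ⟨m, hm⟩).trans_lt neg_one_lt_zero⟩

lemma ne_zero_of_forall_inner_nonpos_imp_eq_zero (hcone : ∀ x, (∀ i, ⟪n i, x⟫_ℝ ≤ 0) → x = 0)
    (hcard : Fintype.card ι = finrank ℝ E + 1) {j k : ι} (hkj : k ≠ j) : n k ≠ 0 := by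
  classical
  intro hk
  obtain ⟨x, hx⟩ := exists_forall_ne_inner_neg hcone hcard k
  have hx0 : x = 0 := hcone x fun m => if hm : m = k then by simp [hm, hk] else (hx m hm).le
  simpa [hx0] using hx j hkj.symm

lemma inner_neg_of_mem_intrinsicInterior (hcone : ∀ x, (∀ i, ⟪n i, x⟫_ℝ ≤ 0) → x = 0)
    (hcard : Fintype.card ι = finrank ℝ E + 1) {j k : ι} (hkj : k ≠ j) {b : E}
    (hb : b ∈ intrinsicInterior ℝ (⋂ m, ⋂ (_ : m ≠ j), {x | ⟪n m, x⟫_ℝ ≤ 0})) :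
    ⟪n k, b⟫_ℝ < 0 := by
  set C := ⋂ m, ⋂ (_ : m ≠ j), {x : E | ⟪n m, x⟫_ℝ ≤ 0}
  obtain ⟨x₀, hx₀⟩ := exists_forall_ne_inner_neg hcone hcard j
  let U := ⋂ m, ⋂ (_ : m ≠ j), {x : E | ⟪n m, x⟫_ℝ < 0}
  have hU : IsOpen U := isOpen_iInter_of_finite fun m => isOpen_iInter_of_finite fun _ =>
    isOpen_lt (continuous_const.inner continuous_id) continuous_const
  have hUC : U ⊆ C := iInter₂_mono fun _ _ _ hx => le_of_lt (α := ℝ) hx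
  have hx₀C : x₀ ∈ interior C := interior_mono hUC (hU.interior_eq.symm ▸ mem_iInter₂.2 hx₀)
  have hspan : affineSpan ℝ C = ⊤ := top_unique <|
    (isOpen_interior.affineSpan_eq_top ⟨x₀, hx₀C⟩).ge.trans (affineSpan_mono ℝ interior_subset)
  have hbC : b ∈ interior C := intrinsicInterior_subset_interior_of_affineSpan_eq_top hspan hb
  exact inner_neg_of_mem_interior_setOf_inner_nonpos
    (ne_zero_of_forall_inner_nonpos_imp_eq_zero hcone hcard hkj)
    (interior_mono (iInter₂_subset_of_subset k hkj subset_rfl) hbC)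

end Halfspaces

section Simplex

variable {E : Type*} [NormedAddCommGroup E] [InnerProductSpace ℝ E] {ι : Type*} [Fintype ι]
  {n b : ι → E}

lemma inner_sum_smul_neg (hb : ∀ j k, k ≠ j → ⟪n k, b j⟫_ℝ < 0) {w : ι → ℝ}
    (hw : ∀ i, 0 ≤ w i) {k : ι} (hk : w k = 0) {m : ι} (hm : 0 < w m) :
    ⟪n k, ∑ i, w i • b i⟫_ℝ < 0 := by
  have hmk : m ≠ k := by rintro rfl; exact hm.ne' hk
  simp only [inner_sum, real_inner_smul_right]
  refine Finset.sum_neg' (fun i _ => ?_) ⟨m, Finset.mem_univ m, ?_⟩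
  · rcases eq_or_ne i k with rfl | hik
    · simp [hk]
    · exact mul_nonpos_of_nonneg_of_nonpos (hw i) (hb i k hik.symm).le
  · exact mul_neg_of_pos_of_neg hm (hb m k hmk.symm)

lemma inner_sum_smul_nonpos (hb : ∀ j k, k ≠ j → ⟪n k, b j⟫_ℝ < 0) {w : ι → ℝ}
    (hw : ∀ i, 0 ≤ w i) {k : ι} (hk : w k = 0) : ⟪n k, ∑ i, w i • b i⟫_ℝ ≤ 0 := by
  by_cases h : ∃ m, 0 < w m
  · obtain ⟨m, hm⟩ := h
    exact (inner_sum_smul_neg hb hw hk hm).le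
  · push Not at h
    simp [fun i => le_antisymm (h i) (hw i)]

/-- Splitting a vanishing combination `∑ cᵢ bᵢ = 0` into positive and negative parts gives a
point `x = ∑ cᵢ⁺ bᵢ = ∑ cᵢ⁻ bᵢ` lying in every half-space, hence `x = 0`; but if some `cₖ ≤ 0`
while some `cₘ > 0`, then `⟪nₖ, x⟫ < 0`. -/
lemma pos_of_sum_smul_eq_zero (hcone : ∀ x, (∀ i, ⟪n i, x⟫_ℝ ≤ 0) → x = 0)
    (hb : ∀ j k, k ≠ j → ⟪n k, b j⟫_ℝ < 0) {c : ι → ℝ} (hc : ∑ i, c i • b i = 0) {m : ι}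
    (hm : 0 < c m) (k : ι) : 0 < c k := by
  by_contra! hk
  have hparts : ∑ i, (c i)⁺ • b i = ∑ i, (c i)⁻ • b i := by
    rw [← sub_eq_zero, ← Finset.sum_sub_distrib, ← hc]
    simp only [← sub_smul, posPart_sub_negPart]
  have hzero : ∑ i, (c i)⁺ • b i = 0 := hcone _ fun i => by
    rcases le_total (c i) 0 with hi | hi
    · exact inner_sum_smul_nonpos hb (fun _ => posPart_nonneg _) (posPart_eq_zero.2 hi)
    · exact hparts ▸ inner_sum_smul_nonpos hb (fun _ => negPart_nonneg _) (negPart_eq_zero.2 hi)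
  have := inner_sum_smul_neg hb (fun _ => posPart_nonneg _) (posPart_eq_zero.2 hk)
    (posPart_pos hm)
  simp [hzero] at this

lemma affineIndependent_of_inner_neg (hcone : ∀ x, (∀ i, ⟪n i, x⟫_ℝ ≤ 0) → x = 0)
    (hb : ∀ j k, k ≠ j → ⟪n k, b j⟫_ℝ < 0) : AffineIndependent ℝ b := by
  have hnonpos : ∀ c : ι → ℝ, ∑ i, c i = 0 → ∑ i, c i • b i = 0 → ∀ i, c i ≤ 0 :=
    fun c hsum hc i => not_lt.1 fun hi =>
      (Finset.sum_pos (fun k _ => pos_of_sum_smul_eq_zero hcone hb hc hi k)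
        ⟨i, Finset.mem_univ i⟩).ne' hsum
  rw [affineIndependent_iff_of_fintype]
  intro w hsum hw i
  rw [Finset.univ.weightedVSub_eq_linear_combination hsum] at hw
  refine le_antisymm (hnonpos w hsum hw i) (neg_nonpos.1 (hnonpos (-w) ?_ ?_ i))
  · simp [hsum]
  · simp [neg_smul, hw]

lemma zero_mem_interior_convexHull_of_inner_neg [FiniteDimensional ℝ E]
    (hcone : ∀ x, (∀ i, ⟪n i, x⟫_ℝ ≤ 0) → x = 0) (hb : ∀ j k, k ≠ j → ⟪n k, b j⟫_ℝ < 0)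
    (hcard : Fintype.card ι = finrank ℝ E + 1) : (0 : E) ∈ interior (convexHull ℝ (range b)) := by
  have hind := affineIndependent_of_inner_neg hcone hb
  let basis : AffineBasis ι ℝ E :=
    ⟨b, hind, hind.affineSpan_eq_top_iff_card_eq_finrank_add_one.2 hcard⟩
  have hsum := basis.sum_coord_apply_eq_one 0
  obtain ⟨m, hm⟩ : ∃ m, 0 < basis.coord m 0 := by
    by_contra! h
    linarith [Finset.sum_nonpos fun i (_ : i ∈ Finset.univ) => h i]
  change (0 : E) ∈ interior (convexHull ℝ (range basis))
  rw [basis.interior_convexHull]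
  exact pos_of_sum_smul_eq_zero hcone hb (basis.linear_combination_coord_eq_self 0) hm

end Simplex

theorem stmt1_general (d : ℕ) (n : Fin (d + 1) → EuclideanSpace ℝ (Fin d))
    (hgen : (⋂ i, {x : EuclideanSpace ℝ (Fin d) | (inner ℝ (n i) x : ℝ) ≤ 0}) = {0})
    (B : Fin (d + 1) → Set (EuclideanSpace ℝ (Fin d)))
    (hB : ∀ i, B i = ⋂ j, ⋂ (_ : j ≠ i), {x : EuclideanSpace ℝ (Fin d) | (inner ℝ (n j) x : ℝ) ≤ 0})
    (b : Fin (d + 1) → EuclideanSpace ℝ (Fin d))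
    (hb : ∀ i, b i ∈ intrinsicInterior ℝ (B i)) :
    AffineIndependent ℝ b ∧
      (0 : EuclideanSpace ℝ (Fin d)) ∈ intrinsicInterior ℝ (convexHull ℝ (Set.range b)) := by
  have hcone : ∀ x, (∀ i, ⟪n i, x⟫_ℝ ≤ 0) → x = 0 := fun x hx => by
    simpa [hgen] using (mem_iInter.2 hx : x ∈ ⋂ i, {x | ⟪n i, x⟫_ℝ ≤ 0})
  have hcard : Fintype.card (Fin (d + 1)) = finrank ℝ (EuclideanSpace ℝ (Fin d)) + 1 := by simp
  have hneg : ∀ j k, k ≠ j → ⟪n k, b j⟫_ℝ < 0 := fun j k hkj =>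
    inner_neg_of_mem_intrinsicInterior hcone hcard hkj (hB j ▸ hb j)
  exact ⟨affineIndependent_of_inner_neg hcone hneg,
    interior_subset_intrinsicInterior (zero_mem_interior_convexHull_of_inner_neg hcone hneg hcard)⟩

theorem stmt1 (d : ℕ) (n : Fin (d + 1) → EuclideanSpace ℝ (Fin d))
    (hunit : ∀ i, ‖n i‖ = 1)
    (hgen : (⋂ i, {x : EuclideanSpace ℝ (Fin d) | (inner ℝ (n i) x : ℝ) ≤ 0}) = {0})
    (B : Fin (d + 1) → Set (EuclideanSpace ℝ (Fin d)))
    (hB : ∀ i, B i = ⋂ j, ⋂ (_ : j ≠ i), {x : EuclideanSpace ℝ (Fin d) | (inner ℝ (n j) x : ℝ) ≤ 0})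
    (b : Fin (d + 1) → EuclideanSpace ℝ (Fin d))
    (hb : ∀ i, b i ∈ intrinsicInterior ℝ (B i)) :
    AffineIndependent ℝ b ∧
      (0 : EuclideanSpace ℝ (Fin d)) ∈ intrinsicInterior ℝ (convexHull ℝ (Set.range b)) :=
  stmt1_general d n hgen B hB b hb
end

section
/- A (d+1)-tuple of closed half-spaces (H₁, …, H_{d+1}) in ℝ^d with 0 ∈ ∂Hᵢ for all i satisfies ⋂ᵢ Hᵢ = {0} if and only if ℝ^d \ {0} = ⋃ᵢ relint Hᵢ, where relint Hᵢ denotes the open half-space corresponding to Hᵢ. -/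
open Set
open scoped Pointwise

section

variable {ι E : Type*} [NormedAddCommGroup E] [InnerProductSpace ℝ E] (n : ι → E)

theorem iInter_inner_nonpos_eq_neg_compl_iUnion_inner_neg :
    ⋂ i, {x : E | inner ℝ (n i) x ≤ 0} = -(⋃ i, {x : E | inner ℝ (n i) x < 0})ᶜ := by
  ext x
  simp [inner_neg_right]

theorem iUnion_inner_neg_subset_compl_zero :
    ⋃ i, {x : E | inner ℝ (n i) x < 0} ⊆ {0}ᶜ := by
  rintro x ⟨_, ⟨i, rfl⟩, hx : inner ℝ (n i) x < 0⟩ rfl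
  simp at hx

theorem iInter_inner_nonpos_eq_zero_iff_compl_zero_eq_iUnion_inner_neg :
    ⋂ i, {x : E | inner ℝ (n i) x ≤ 0} = {0} ↔
      ({0}ᶜ : Set E) = ⋃ i, {x : E | inner ℝ (n i) x < 0} := by
  have zero_mem : (0 : E) ∈ ⋂ i, {x : E | inner ℝ (n i) x ≤ 0} := by simp
  rw [← (nonempty_of_mem zero_mem).subset_singleton_iff, subset_antisymm_iff,
    and_iff_left (iUnion_inner_neg_subset_compl_zero n), iInter_inner_nonpos_eq_neg_compl_iUnion_inner_neg, Set.neg_subset, neg_singleton, neg_zero,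
    compl_subset_comm]

end

theorem stmt2_general (d : ℕ) (n : Fin (d + 1) → EuclideanSpace ℝ (Fin d)) :
    (⋂ i, {x : EuclideanSpace ℝ (Fin d) | (inner ℝ (n i) x : ℝ) ≤ 0}) = {0} ↔
      ({0}ᶜ : Set (EuclideanSpace ℝ (Fin d))) =
        ⋃ i, {x : EuclideanSpace ℝ (Fin d) | (inner ℝ (n i) x : ℝ) < 0} :=
  iInter_inner_nonpos_eq_zero_iff_compl_zero_eq_iUnion_inner_neg n

theorem stmt2 (d : ℕ) (n : Fin (d + 1) → EuclideanSpace ℝ (Fin d))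
    (hunit : ∀ i, ‖n i‖ = 1) :
    (⋂ i, {x : EuclideanSpace ℝ (Fin d) | (inner ℝ (n i) x : ℝ) ≤ 0}) = {0} ↔
      ({0}ᶜ : Set (EuclideanSpace ℝ (Fin d))) =
        ⋃ i, {x : EuclideanSpace ℝ (Fin d) | (inner ℝ (n i) x : ℝ) < 0} :=
  stmt2_general d n
end

section
/- Let ν be a Borel probability measure on ℝ^d and let ε ∈ (0, 1/((d+1)(2d+1))]. Suppose (H₁, …, H_{d+1}) is a generating (d+1)-tuple of half-spaces such that ν(Hᵢ) > 1 - 1/(d+1) - ε for every i, i.e., the tuple has weight less than 1/(d+1) + ε. Let Bᵢ = ⋂_{j≠i} Hⱼ be the corresponding simplicial cones. Then ∑ᵢ₌₁^{d+1} ν(Bᵢ) > 1 - (d+1)ε. -/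
open MeasureTheory ENNReal

theorem stmt3 (d : ℕ) (ν : Measure (EuclideanSpace ℝ (Fin d))) [IsProbabilityMeasure ν]
    (ε : ℝ) (hε : 0 < ε) (hε' : ε ≤ 1 / ((d + 1) * (2 * d + 1)))
    (n : Fin (d + 1) → EuclideanSpace ℝ (Fin d))
    (hunit : ∀ i, ‖n i‖ = 1)
    (hgen : (⋂ i, {x : EuclideanSpace ℝ (Fin d) | (inner ℝ (n i) x : ℝ) ≤ 0}) = {0})
    (hw : ∀ i, (ν {x : EuclideanSpace ℝ (Fin d) | (inner ℝ (n i) x : ℝ) ≤ 0}).toReal >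
      1 - 1 / (d + 1) - ε)
    (B : Fin (d + 1) → Set (EuclideanSpace ℝ (Fin d)))
    (hB : ∀ i, B i = ⋂ j, ⋂ (_ : j ≠ i), {x : EuclideanSpace ℝ (Fin d) | (inner ℝ (n j) x : ℝ) ≤ 0}) :
    ∑ i, (ν (B i)).toReal > 1 - (d + 1) * ε := by
  classical
  set H : Fin (d + 1) → Set (EuclideanSpace ℝ (Fin d)) :=
    fun i => {x | (inner ℝ (n i) x : ℝ) ≤ 0} with hHdef
  have hHm : ∀ i, MeasurableSet (H i) := by
    intro i
    exact measurableSet_le (Continuous.measurable (Continuous.inner continuous_const continuous_id)) measurable_const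
  have hBm : ∀ i, MeasurableSet (B i) := by
    intro i
    rw [hB i]
    exact MeasurableSet.iInter fun j => MeasurableSet.iInter fun _ => hHm j
  rcases Nat.eq_zero_or_pos d with hd | hd
  · subst hd
    have hB0 : B 0 = Set.univ := by
      rw [hB 0]
      ext x
      simp only [Set.mem_iInter, Set.mem_univ, iff_true]
      intro j hj
      exact absurd (Fin.eq_zero j) hj
    rw [Fin.sum_univ_one, hB0, measure_univ]
    norm_num
    linarith
  -- main case d ≥ 1
  have key : ∀ x, (Finset.univ.filter fun i => x ∈ H i).card + 1 ≤
      d + (Finset.univ.filter fun i => x ∈ B i).card := by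
    intro x
    by_cases hx : x = 0
    · subst hx
      have hc : (Finset.univ.filter fun i => (0 : EuclideanSpace ℝ (Fin d)) ∈ B i)
          = Finset.univ := by
        ext i
        simp only [Finset.mem_filter, Finset.mem_univ, true_and, iff_true]
        rw [hB i]
        simp only [Set.mem_iInter]
        intro j hj
        simp [hHdef]
      have h1 : (Finset.univ.filter fun i => (0 : EuclideanSpace ℝ (Fin d)) ∈ H i).card ≤ d + 1 :=
        le_trans (Finset.card_filter_le _ _) (by simp)
      rw [hc, Finset.card_univ, Fintype.card_fin]
      omega
    · -- x ≠ 0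
      have hxH : ∃ j, x ∉ H j := by
        by_contra h
        push_neg at h
        have : x ∈ ⋂ i, {y : EuclideanSpace ℝ (Fin d) | (inner ℝ (n i) y : ℝ) ≤ 0} :=
          Set.mem_iInter.mpr h
        rw [hgen] at this
        exact hx this
      obtain ⟨j, hj⟩ := hxH
      have ha : (Finset.univ.filter fun i => x ∈ H i).card ≤ d := by
        have hsub : (Finset.univ.filter fun i => x ∈ H i) ⊆ Finset.univ.erase j := by
          intro k hk
          simp only [Finset.mem_filter] at hk
          refine Finset.mem_erase.mpr ⟨?_, Finset.mem_univ k⟩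
          rintro rfl
          exact hj hk.2
        have := Finset.card_le_card hsub
        rw [Finset.card_erase_of_mem (Finset.mem_univ j), Finset.card_univ,
          Fintype.card_fin] at this
        omega
      by_cases hc : (Finset.univ.filter fun i => x ∈ B i).card = 0
      · -- show card filter H ≤ d - 1
        by_contra hcon
        push_neg at hcon
        have had : (Finset.univ.filter fun i => x ∈ H i).card = d := by omega
        have hcompl : (Finset.univ \ (Finset.univ.filter fun i => x ∈ H i)).card = 1 := by
          rw [Finset.card_sdiff_of_subset (Finset.filter_subset _ _), Finset.card_univ,
            Fintype.card_fin, had]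
          omega
        obtain ⟨j', hj'⟩ := Finset.card_eq_one.mp hcompl
        have hxB : x ∈ B j' := by
          rw [hB j']
          simp only [Set.mem_iInter]
          intro k hk
          by_contra hnk
          have hkc : k ∈ Finset.univ \ (Finset.univ.filter fun i => x ∈ H i) :=
            Finset.mem_sdiff.mpr ⟨Finset.mem_univ k, by
              simp only [Finset.mem_filter]
              exact fun h => hnk h.2⟩
          rw [hj'] at hkc
          exact hk (Finset.mem_singleton.mp hkc)
        have : j' ∈ Finset.univ.filter fun i => x ∈ B i := by
          simp [hxB]
        have := Finset.card_pos.mpr ⟨j', this⟩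
        omega
      · omega
  -- integral identity
  have hint : ∀ (S : Fin (d + 1) → Set (EuclideanSpace ℝ (Fin d))),
      (∀ i, MeasurableSet (S i)) →
      ∫⁻ x, ((Finset.univ.filter fun i => x ∈ S i).card : ℝ≥0∞) ∂ν = ∑ i, ν (S i) := by
    intro S hS
    have heq : ∀ x, ((Finset.univ.filter fun i => x ∈ S i).card : ℝ≥0∞)
        = ∑ i, (S i).indicator (1 : EuclideanSpace ℝ (Fin d) → ℝ≥0∞) x := by
      intro x
      rw [← Finset.sum_boole]
      exact Finset.sum_congr rfl fun i _ => by simp [Set.indicator_apply]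
    simp_rw [heq]
    rw [lintegral_finset_sum _ (fun i _ => (measurable_one.indicator (hS i)))]
    congr 1
    ext i
    exact lintegral_indicator_one (hS i)
  have hfa : Measurable fun x => ((Finset.univ.filter fun i => x ∈ H i).card : ℝ≥0∞) := by
    have heq : ∀ x, ((Finset.univ.filter fun i => x ∈ H i).card : ℝ≥0∞)
        = ∑ i, (H i).indicator (1 : EuclideanSpace ℝ (Fin d) → ℝ≥0∞) x := by
      intro x
      rw [← Finset.sum_boole]
      exact Finset.sum_congr rfl fun i _ => by simp [Set.indicator_apply]
    simp_rw [heq]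
    exact Finset.measurable_sum _ fun i _ => measurable_one.indicator (hHm i)
  have main : ∑ i, ν (H i) + 1 ≤ (d : ℝ≥0∞) + ∑ i, ν (B i) := by
    have l1 := hint H hHm
    have l2 := hint B hBm
    calc ∑ i, ν (H i) + 1
        = ∫⁻ x, (((Finset.univ.filter fun i => x ∈ H i).card : ℝ≥0∞) + 1) ∂ν := by
          rw [lintegral_add_right _ measurable_const, l1, lintegral_one, measure_univ]
      _ ≤ ∫⁻ x, ((d : ℝ≥0∞) + ((Finset.univ.filter fun i => x ∈ B i).card : ℝ≥0∞)) ∂ν := by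
          apply lintegral_mono
          intro x
          have := key x
          have : ((Finset.univ.filter fun i => x ∈ H i).card + 1 : ℕ)
              ≤ ((d + (Finset.univ.filter fun i => x ∈ B i).card : ℕ)) := this
          exact_mod_cast Nat.cast_le.mpr this
      _ = (d : ℝ≥0∞) + ∑ i, ν (B i) := by
          rw [lintegral_add_left measurable_const, l2, lintegral_const, measure_univ, mul_one]
  -- convert to reals
  have hfin : ∀ (S : Set (EuclideanSpace ℝ (Fin d))), ν S ≠ ⊤ :=
    fun S => (measure_lt_top ν S).ne
  have hmainR : ∑ i, (ν (H i)).toReal + 1 ≤ (d : ℝ) + ∑ i, (ν (B i)).toReal := by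
    have h1 : (∑ i, ν (H i) + 1).toReal = ∑ i, (ν (H i)).toReal + 1 := by
      rw [ENNReal.toReal_add (by exact (ENNReal.sum_lt_top.mpr fun i _ => measure_lt_top ν _).ne)
        (by norm_num), ENNReal.toReal_sum (fun i _ => hfin _)]
      norm_num
    have h2 : ((d : ℝ≥0∞) + ∑ i, ν (B i)).toReal = (d : ℝ) + ∑ i, (ν (B i)).toReal := by
      rw [ENNReal.toReal_add (by simp) (by exact (ENNReal.sum_lt_top.mpr fun i _ => measure_lt_top ν _).ne),
        ENNReal.toReal_sum (fun i _ => hfin _)]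
      simp
    rw [← h1, ← h2]
    exact ENNReal.toReal_mono (by
      refine ENNReal.add_ne_top.mpr ⟨by simp, (ENNReal.sum_lt_top.mpr fun i _ => measure_lt_top ν _).ne⟩) main
  -- lower bound on sum of ν (H i)
  have hsumH : ∑ i, (ν (H i)).toReal > (d + 1 : ℝ) * (1 - 1 / (d + 1) - ε) := by
    have : ∑ i, (ν (H i)).toReal > ∑ _i : Fin (d + 1), (1 - 1 / ((d : ℝ) + 1) - ε) := by
      apply Finset.sum_lt_sum_of_nonempty Finset.univ_nonempty
      intro i _
      exact hw i
    simp only [Finset.sum_const, Finset.card_univ, Fintype.card_fin, nsmul_eq_mul] at this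
    push_cast at this
    linarith
  have hone : ((d : ℝ) + 1) * (1 / ((d : ℝ) + 1)) = 1 := by
    field_simp
  have hd1 : ((d : ℝ) + 1) * (1 - 1 / ((d : ℝ) + 1) - ε) = (d : ℝ) - ((d : ℝ) + 1) * ε := by
    ring_nf
    ring_nf at hone
    nlinarith [hone]

  nlinarith [hsumH, hmainR, hd1]
end

section
/- Let V be a Euclidean d-space, a ∈ (1/(d+1), 1/d), and let ν be a nice probability measure on V with sup_x depth_ν(x) < a. Then ν has a unique Tukey median, i.e., there is at most one point o with depth_ν(o) = sup_x depth_ν(x). -/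
/-
If `o ≠ o'` were two Tukey medians of depth `α`, their midpoint `x` would be one too, since every
closed half-space containing `x` contains `o` or `o'`. Call a unit vector `m` a minimal direction
at `x` when the half-space `⟪m, ·⟫ ≤ ⟪m, x⟫` has mass exactly `α`. Because the mass of
`⟪m, ·⟫ ≤ c` is strictly increasing in `c`, neither median lies strictly inside such a half-space,
so every minimal direction is orthogonal to `o' - o`. If `0` were not in the convex hull of the
(compact) set of minimal directions, a separating vector `v` would have `0 < ⟪m, v⟫` for all of
them, and moving `x` slightly along `v` would increase its depth. Hence `0` is a positive
combination of minimal directions, by Carathéodory in the hyperplane `(o' - o)ᗮ` of at most `d`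
of them; their half-spaces cover the space, so `1 ≤ d α < d a < 1`.
-/

open MeasureTheory

/-- The half-space (Tukey) depth of a point. -/
noncomputable def depthPt {W : Type*} [NormedAddCommGroup W] [InnerProductSpace ℝ W]
    [MeasurableSpace W] (ν : Measure W) (x : W) : ℝ :=
  sInf {r : ℝ | ∃ (m : W) (c : ℝ), m ≠ 0 ∧ (inner ℝ m x : ℝ) ≤ c ∧
    r = (ν {y : W | (inner ℝ m y : ℝ) ≤ c}).toReal}

open Set Filter Topology Module
open scoped RealInnerProductSpace

variable {E : Type*} [NormedAddCommGroup E] [InnerProductSpace ℝ E]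

def halfSpace (m : E) (c : ℝ) : Set E := {y | ⟪m, y⟫ ≤ c}

lemma isClosed_halfSpace (m : E) (c : ℝ) : IsClosed (halfSpace m c) :=
  isClosed_le (continuous_const.inner continuous_id) continuous_const

lemma halfSpace_smul {r : ℝ} (hr : 0 < r) (m : E) (c : ℝ) :
    halfSpace (r • m) (r * c) = halfSpace m c := by
  ext y
  simp only [halfSpace, mem_ofPred_eq, real_inner_smul_left, mul_le_mul_iff_right₀ hr]

lemma exists_inner_eq {m : E} (hm : m ≠ 0) (c : ℝ) : ∃ y, ⟪m, y⟫ = c :=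
  ⟨(c / ⟪m, m⟫) • m, by rw [real_inner_smul_right, div_mul_cancel₀ _ (inner_self_ne_zero.2 hm)]⟩

lemma inner_midpoint (m x y : E) : ⟪m, midpoint ℝ x y⟫ = (⟪m, x⟫ + ⟪m, y⟫) / 2 := by
  rw [midpoint_eq_smul_add, real_inner_smul_right, inner_add_right, invOf_eq_inv]
  ring

lemma iUnion_halfSpace_eq_univ {ι : Type*} [Fintype ι] [Nonempty ι] {w : ι → ℝ} {z : ι → E}
    (hw : ∀ i, 0 < w i) (hz : ∑ i, w i • z i = 0) (x : E) :
    ⋃ i, halfSpace (z i) ⟪z i, x⟫ = univ := by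
  refine eq_univ_of_forall fun y => ?_
  by_contra hy
  simp only [mem_iUnion, halfSpace, mem_ofPred_eq, not_exists, not_le] at hy
  have hpos : 0 < ∑ i, w i * ⟪z i, y - x⟫ :=
    Finset.sum_pos (fun i _ => mul_pos (hw i) (by rw [inner_sub_right]; linarith [hy i]))
      Finset.univ_nonempty
  have hzero : ∑ i, w i * ⟪z i, y - x⟫ = 0 := by
    simp_rw [← real_inner_smul_left, ← sum_inner, hz, inner_zero_left]
  linarith

lemma isCompact_convexHull [FiniteDimensional ℝ E] {s : Set E} (hs : IsCompact s) :
    IsCompact (convexHull ℝ s) := by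
  let combo (k : ℕ) (p : (Fin k → ℝ) × (Fin k → E)) : E := ∑ i, p.1 i • p.2 i
  have hcombo : ∀ k, Continuous (combo k) := fun k => by fun_prop
  suffices convexHull ℝ s = ⋃ k ∈ Finset.range (finrank ℝ E + 2),
      combo k '' (stdSimplex ℝ (Fin k) ×ˢ univ.pi fun _ => s) by
    rw [this]
    exact (Finset.range _).isCompact_biUnion fun k _ =>
      ((isCompact_stdSimplex ℝ _).prod (isCompact_univ_pi fun _ => hs)).image (hcombo k)
  refine Subset.antisymm (fun x hx => ?_) ?_
  · obtain ⟨ι, _, z, w, hzs, hz, hw, hw1, hwz⟩ := eq_pos_convex_span_of_mem_convexHull hx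
    have hcard : Fintype.card ι < finrank ℝ E + 2 := by
      have := Submodule.finrank_le (vectorSpan ℝ (range z))
      have := hz.card_le_finrank_succ
      omega
    let e := Fintype.equivFin ι
    refine mem_biUnion (Finset.mem_range.2 hcard)
      ⟨(w ∘ e.symm, z ∘ e.symm), ⟨⟨fun i => (hw _).le, ?_⟩, fun i _ => hzs (mem_range_self _)⟩, ?_⟩
    · rw [← hw1]; exact e.symm.sum_comp w
    · rw [← hwz]; exact e.symm.sum_comp fun i => w i • z i
  · simp only [iUnion_subset_iff, image_subset_iff]
    rintro k - ⟨w, z⟩ ⟨⟨hw0, hw1⟩, hz⟩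
    exact (convex_convexHull ℝ s).sum_mem (fun i _ => hw0 i) hw1
      fun i _ => subset_convexHull ℝ s (hz i (mem_univ i))

lemma exists_forall_inner_pos_of_zero_notMem_convexHull [FiniteDimensional ℝ E] {s : Set E}
    (hs : IsCompact s) (h0 : (0 : E) ∉ convexHull ℝ s) : ∃ v, ∀ m ∈ s, 0 < ⟪m, v⟫ := by
  obtain ⟨l, u, hl0, hl⟩ := geometric_hahn_banach_point_closed (convex_convexHull ℝ s)
    (isCompact_convexHull hs).isClosed h0
  refine ⟨(InnerProductSpace.toDual ℝ E).symm l, fun m hm => ?_⟩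
  rw [real_inner_comm, InnerProductSpace.toDual_symm_apply]
  linarith [map_zero l, hl m (subset_convexHull ℝ s hm)]

section Measure

variable [MeasurableSpace E]

lemma measurableSet_halfSpace [BorelSpace E] (m : E) (c : ℝ) : MeasurableSet (halfSpace m c) :=
  (isClosed_halfSpace m c).measurableSet

lemma addHaar_hyperplane [BorelSpace E] [FiniteDimensional ℝ E] (μ : Measure E) [μ.IsAddHaarMeasure]
    {m : E} (hm : m ≠ 0) (c : ℝ) : μ {y | ⟪m, y⟫ = c} = 0 := by
  obtain ⟨y₀, hy₀⟩ := exists_inner_eq hm c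
  have hset : {y | ⟪m, y⟫ = c} = (AffineSubspace.mk' y₀ (LinearMap.ker (innerₛₗ ℝ m)) : Set E) := by
    ext y
    simp [AffineSubspace.mem_mk', inner_sub_right, hy₀, sub_eq_zero]
  rw [hset]
  refine Measure.addHaar_affineSubspace μ _ fun htop => hm ?_
  have := congrArg AffineSubspace.direction htop
  simp only [AffineSubspace.direction_mk', AffineSubspace.direction_top,
    LinearMap.ker_eq_top] at this
  exact inner_self_eq_zero.1 (LinearMap.congr_fun this m)

lemma depthPt_le_measure_halfSpace (ν : Measure E) {x m : E} (hm : m ≠ 0) {c : ℝ}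
    (hc : ⟪m, x⟫ ≤ c) : depthPt ν x ≤ (ν (halfSpace m c)).toReal :=
  csInf_le ⟨0, by rintro _ ⟨-, -, -, -, rfl⟩; positivity⟩ ⟨m, c, hm, hc, rfl⟩

lemma le_depthPt [Nontrivial E] {ν : Measure E} {x : E} {r : ℝ}
    (h : ∀ m c, m ≠ 0 → ⟪m, x⟫ ≤ c → r ≤ (ν (halfSpace m c)).toReal) : r ≤ depthPt ν x := by
  obtain ⟨m, hm⟩ := exists_ne (0 : E)
  exact le_csInf ⟨_, m, _, hm, le_rfl, rfl⟩ fun _ ⟨m, c, hm, hc, hr⟩ => hr ▸ h m c hm hc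

lemma min_depthPt_le_depthPt_midpoint [Nontrivial E] (ν : Measure E) (x y : E) :
    min (depthPt ν x) (depthPt ν y) ≤ depthPt ν (midpoint ℝ x y) := by
  refine le_depthPt fun m c hm hc => ?_
  rw [inner_midpoint] at hc
  rcases le_total ⟪m, x⟫ ⟪m, y⟫ with h | h
  · exact min_le_of_left_le (depthPt_le_measure_halfSpace ν hm (by linarith))
  · exact min_le_of_right_le (depthPt_le_measure_halfSpace ν hm (by linarith))

def dirDepth (ν : Measure E) (x m : E) : ℝ := (ν (halfSpace m ⟪m, x⟫)).toReal

lemma depthPt_le_dirDepth (ν : Measure E) {x m : E} (hm : m ≠ 0) :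
    depthPt ν x ≤ dirDepth ν x m :=
  depthPt_le_measure_halfSpace ν hm le_rfl

def minimalDirections (ν : Measure E) (x : E) : Set E :=
  {m | ‖m‖ = 1 ∧ dirDepth ν x m = depthPt ν x}

lemma one_le_finrank_mul_depthPt [FiniteDimensional ℝ E] {ν : Measure E} [IsProbabilityMeasure ν]
    {x : E} {K : Submodule ℝ E} (hK : K ≠ ⊤) (hdirs : minimalDirections ν x ⊆ K)
    (h0 : (0 : E) ∈ convexHull ℝ (minimalDirections ν x)) :
    1 ≤ finrank ℝ E * depthPt ν x := by
  obtain ⟨ι, _, z, w, hzdirs, hz, hw, hw1, hwz⟩ := eq_pos_convex_span_of_mem_convexHull h0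
  have hspan : vectorSpan ℝ (range z) ≤ K := by
    rw [vectorSpan_def, Submodule.span_le]
    rintro _ ⟨p, hp, q, hq, rfl⟩
    exact K.sub_mem (hdirs (hzdirs hp)) (hdirs (hzdirs hq))
  have hcard : Fintype.card ι ≤ finrank ℝ E := by
    have := hz.card_le_finrank_succ
    have := Submodule.finrank_mono hspan
    have := Submodule.finrank_lt hK
    omega
  have : Nonempty ι := by
    by_contra! hι
    simp at hw1
  have hcover := iUnion_halfSpace_eq_univ hw hwz x
  calc (1 : ℝ) = (ν (⋃ i, halfSpace (z i) ⟪z i, x⟫)).toReal := by simp [hcover]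
    _ ≤ ∑ i, dirDepth ν x (z i) := by
      simp only [dirDepth]
      rw [← ENNReal.toReal_sum fun i _ => measure_ne_top ν _]
      exact ENNReal.toReal_mono (ENNReal.sum_ne_top.2 fun i _ => measure_ne_top ν _)
        (measure_iUnion_fintype_le ν _)
    _ = Fintype.card ι * depthPt ν x := by
      simp [(hzdirs (mem_range_self _)).2]
    _ ≤ finrank ℝ E * depthPt ν x := by
      gcongr
      exact Real.sInf_nonneg (by rintro _ ⟨-, -, -, -, rfl⟩; positivity)

variable {ν : Measure E} [IsFiniteMeasure ν]

lemma monotone_measure_halfSpace (m : E) : Monotone fun c => (ν (halfSpace m c)).toReal :=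
  fun _ _ hc => ENNReal.toReal_mono (measure_ne_top ν _) (measure_mono fun _ hy => le_trans hy hc)

lemma strictMono_measure_halfSpace [BorelSpace E] [ν.IsOpenPosMeasure] {m : E} (hm : m ≠ 0) :
    StrictMono fun c => (ν (halfSpace m c)).toReal := by
  intro c c' hc
  let slab := (fun y => ⟪m, y⟫) ⁻¹' Ioo c c'
  have hslab_open : IsOpen slab := isOpen_Ioo.preimage (continuous_const.inner continuous_id)
  have hslab : ν slab ≠ 0 := by
    obtain ⟨y, hy⟩ := exists_inner_eq hm ((c + c') / 2)
    refine (hslab_open.measure_pos ν ⟨y, ?_⟩).ne'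
    simp only [slab, mem_preimage, hy, mem_Ioo]
    constructor <;> linarith
  have hdisj : Disjoint (halfSpace m c) slab :=
    disjoint_left.2 fun y hy hy' => (not_lt.2 hy) hy'.1
  have hsub : halfSpace m c ∪ slab ⊆ halfSpace m c' := by
    rintro y (hy | hy)
    exacts [le_trans hy hc.le, hy.2.le]
  refine ENNReal.toReal_strict_mono (measure_ne_top ν _) ?_
  calc ν (halfSpace m c) < ν (halfSpace m c) + ν slab :=
        ENNReal.lt_add_right (measure_ne_top ν _) hslab
    _ = ν (halfSpace m c ∪ slab) := (measure_union hdisj hslab_open.measurableSet).symm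
    _ ≤ ν (halfSpace m c') := measure_mono hsub

lemma le_depthPt_of_forall_norm_eq_one [Nontrivial E] {x : E} {r : ℝ}
    (h : ∀ m, ‖m‖ = 1 → r ≤ dirDepth ν x m) : r ≤ depthPt ν x := by
  refine le_depthPt fun m c hm hc => ?_
  have hnorm : 0 < ‖m‖⁻¹ := inv_pos.2 (norm_pos_iff.2 hm)
  rw [← halfSpace_smul hnorm]
  refine (h _ (norm_smul_inv_norm hm)).trans (monotone_measure_halfSpace _ ?_)
  rw [real_inner_smul_left]
  exact mul_le_mul_of_nonneg_left hc hnorm.le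

lemma inner_le_of_mem_minimalDirections [BorelSpace E] [ν.IsOpenPosMeasure] {x y m : E}
    (hm : m ∈ minimalDirections ν x) (hxy : depthPt ν x ≤ depthPt ν y) : ⟪m, x⟫ ≤ ⟪m, y⟫ := by
  have hm0 : m ≠ 0 := ne_zero_of_mem_unit_sphere ⟨m, mem_sphere_zero_iff_norm.2 hm.1⟩
  by_contra! hlt
  have : dirDepth ν y m < dirDepth ν x m := strictMono_measure_halfSpace hm0 hlt
  linarith [depthPt_le_dirDepth ν (x := y) hm0, hm.2]

lemma minimalDirections_midpoint_subset_orthogonal [BorelSpace E] [ν.IsOpenPosMeasure] {x y : E}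
    (hx : depthPt ν (midpoint ℝ x y) ≤ depthPt ν x)
    (hy : depthPt ν (midpoint ℝ x y) ≤ depthPt ν y) :
    minimalDirections ν (midpoint ℝ x y) ⊆ (ℝ ∙ (y - x))ᗮ := by
  intro m hm
  have hmx := inner_le_of_mem_minimalDirections hm hx
  have hmy := inner_le_of_mem_minimalDirections hm hy
  rw [inner_midpoint] at hmx hmy
  rw [SetLike.mem_coe, Submodule.mem_orthogonal_singleton_iff_inner_right, real_inner_comm,
    inner_sub_right]
  linarith

variable [BorelSpace E] [FiniteDimensional ℝ E] {μ : Measure E} [μ.IsAddHaarMeasure]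

lemma continuousAt_measure_halfSpace (hνμ : ν ≪ μ) {m : E} (hm : m ≠ 0) (c : ℝ) :
    ContinuousAt (fun p : E × ℝ => (ν (halfSpace p.1 p.2)).toReal) (m, c) := by
  refine (ENNReal.tendsto_toReal (measure_ne_top ν _)).comp <|
    tendsto_measure_of_ae_tendsto_indicator_of_isFiniteMeasure _ (measurableSet_halfSpace m c)
      (fun p => measurableSet_halfSpace p.1 p.2) ?_
  have hoff : ∀ᵐ y ∂ν, ⟪m, y⟫ ≠ c := by
    rw [ae_iff]
    simpa using hνμ (addHaar_hyperplane μ hm c)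
  filter_upwards [hoff] with y hy
  have hcont : ContinuousAt (fun p : E × ℝ => ⟪p.1, y⟫) (m, c) := by fun_prop
  rcases hy.lt_or_gt with hlt | hgt
  · filter_upwards [hcont.eventually_lt continuousAt_snd hlt] with p hp
    exact iff_of_true hp.le hlt.le
  · filter_upwards [continuousAt_snd.eventually_lt hcont hgt] with p hp
    exact iff_of_false (not_le.2 hp) (not_le.2 hgt)

lemma continuousAt_dirDepth (hνμ : ν ≪ μ) {x m : E} (hm : m ≠ 0) :
    ContinuousAt (fun p : E × E => dirDepth ν p.1 p.2) (x, m) := by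
  have h : ContinuousAt (fun p : E × E => (p.2, ⟪p.2, p.1⟫)) (x, m) := by fun_prop
  exact (continuousAt_measure_halfSpace hνμ hm ⟪m, x⟫).comp_of_eq h rfl

lemma continuousOn_dirDepth_sphere (hνμ : ν ≪ μ) (x : E) :
    ContinuousOn (dirDepth ν x) (Metric.sphere 0 1) := fun m hm =>
  ((continuousAt_dirDepth hνμ (ne_zero_of_mem_unit_sphere ⟨m, hm⟩)).comp
    (f := fun m => (x, m)) (by fun_prop)).continuousWithinAt

lemma exists_dirDepth_eq_depthPt [Nontrivial E] (hνμ : ν ≪ μ) (x : E) :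
    ∃ m, ‖m‖ = 1 ∧ dirDepth ν x m = depthPt ν x := by
  obtain ⟨m, hm, hmin⟩ := (isCompact_sphere (0 : E) 1).exists_isMinOn
    (NormedSpace.sphere_nonempty.2 zero_le_one) (continuousOn_dirDepth_sphere hνμ x)
  have hm1 : ‖m‖ = 1 := mem_sphere_zero_iff_norm.1 hm
  refine ⟨m, hm1, le_antisymm ?_ (depthPt_le_dirDepth ν (norm_ne_zero_iff.1 (by simp [hm1])))⟩
  exact le_depthPt_of_forall_norm_eq_one fun m' hm' => hmin (mem_sphere_zero_iff_norm.2 hm')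

lemma isCompact_minimalDirections (hνμ : ν ≪ μ) (x : E) :
    IsCompact (minimalDirections ν x) := by
  have hset : minimalDirections ν x = Metric.sphere 0 1 ∩ dirDepth ν x ⁻¹' {depthPt ν x} := by
    ext m
    simp [minimalDirections]
  rw [hset]
  exact (isCompact_sphere 0 1).of_isClosed_subset
    ((continuousOn_dirDepth_sphere hνμ x).preimage_isClosed_of_isClosed Metric.isClosed_sphere
      isClosed_singleton) inter_subset_left

lemma exists_depthPt_lt_of_forall_inner_pos [Nontrivial E] [ν.IsOpenPosMeasure] (hνμ : ν ≪ μ)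
    {x v : E} (hv : ∀ m ∈ minimalDirections ν x, 0 < ⟪m, v⟫) : ∃ y, depthPt ν x < depthPt ν y := by
  set α := depthPt ν x
  -- Directions with `0 < ⟪m, v⟫` gain mass as `x` moves along `v`; the others start strictly
  -- above `α` and, by compactness of the sphere, stay there for small `t`.
  have hlocal : ∀ m ∈ Metric.sphere (0 : E) 1, ∀ᶠ q : ℝ × E in 𝓝 (0, m),
      α < dirDepth ν (x + q.1 • v) q.2 ∨ 0 < ⟪q.2, v⟫ := by
    intro m hm
    by_cases hmv : 0 < ⟪m, v⟫
    · have hcont : ContinuousAt (fun q : ℝ × E => ⟪q.2, v⟫) (0, m) := by fun_prop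
      exact (continuousAt_const.eventually_lt hcont hmv).mono fun q hq => Or.inr hq
    · have hm0 : m ≠ 0 := ne_zero_of_mem_unit_sphere ⟨m, hm⟩
      have hgt : α < dirDepth ν x m := (depthPt_le_dirDepth ν hm0).lt_of_ne fun h =>
        hmv (hv m ⟨mem_sphere_zero_iff_norm.1 hm, h.symm⟩)
      have hpath : ContinuousAt (fun q : ℝ × E => (x + q.1 • v, q.2)) (0, m) := by fun_prop
      have hcont : ContinuousAt (fun q : ℝ × E => dirDepth ν (x + q.1 • v) q.2) (0, m) :=
        (continuousAt_dirDepth hνμ (x := x) hm0).comp_of_eq hpath (by simp)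
      exact (continuousAt_const.eventually_lt hcont (by simpa using hgt)).mono fun q hq => Or.inl hq
  have hnear : ∀ᶠ t in 𝓝 (0 : ℝ), ∀ m ∈ Metric.sphere (0 : E) 1,
      α < dirDepth ν (x + t • v) m ∨ 0 < ⟪m, v⟫ :=
    (isCompact_sphere (0 : E) 1).eventually_forall_of_forall_eventually hlocal
  obtain ⟨t, ht, htpos⟩ :=
    ((hnear.filter_mono nhdsWithin_le_nhds).and (self_mem_nhdsWithin (s := Ioi 0))).exists
  obtain ⟨m, hm1, hm⟩ := exists_dirDepth_eq_depthPt hνμ (x + t • v)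
  refine ⟨x + t • v, hm ▸ ?_⟩
  rcases ht m (mem_sphere_zero_iff_norm.2 hm1) with h | hmv
  · exact h
  · have hm0 : m ≠ 0 := norm_ne_zero_iff.1 (by simp [hm1])
    calc α ≤ dirDepth ν x m := depthPt_le_dirDepth ν hm0
      _ < dirDepth ν (x + t • v) m := by
        refine strictMono_measure_halfSpace hm0 ?_
        rw [inner_add_right, real_inner_smul_right]
        nlinarith

lemma zero_mem_convexHull_minimalDirections [Nontrivial E] [ν.IsOpenPosMeasure] (hνμ : ν ≪ μ)
    {x : E} (hx : ∀ y, depthPt ν y ≤ depthPt ν x) :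
    (0 : E) ∈ convexHull ℝ (minimalDirections ν x) := by
  by_contra h0
  obtain ⟨v, hv⟩ := exists_forall_inner_pos_of_zero_notMem_convexHull
    (isCompact_minimalDirections hνμ x) h0
  obtain ⟨y, hy⟩ := exists_depthPt_lt_of_forall_inner_pos hνμ hv
  exact hy.not_ge (hx y)

end Measure

theorem stmt7_general (d : ℕ) (a : ℝ) (ha' : a < 1 / d)
    (ν : Measure (EuclideanSpace ℝ (Fin d))) [IsProbabilityMeasure ν]
    (f : EuclideanSpace ℝ (Fin d) → ℝ)
    (hf : Continuous f) (hfpos : ∀ x, 0 < f x)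
    (hν : ν = volume.withDensity (fun x => ENNReal.ofReal (f x)))
    (hsup : (⨆ x, depthPt ν x) < a)
    (o o' : EuclideanSpace ℝ (Fin d))
    (hmed : ∀ x, depthPt ν x ≤ depthPt ν o)
    (hmed' : ∀ x, depthPt ν x ≤ depthPt ν o') :
    o = o' := by
  by_contra hne
  have : Nontrivial (EuclideanSpace ℝ (Fin d)) := ⟨o, o', hne⟩
  have hνμ : ν ≪ volume := hν ▸ withDensity_absolutelyContinuous _ _
  have hμν : volume ≪ ν := hν ▸ withDensity_absolutelyContinuous'
    hf.measurable.ennreal_ofReal.aemeasurable (ae_of_all _ fun y => by simpa using hfpos y)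
  have : ν.IsOpenPosMeasure := hμν.isOpenPosMeasure
  set x := midpoint ℝ o o'
  have hx_med : ∀ y, depthPt ν y ≤ depthPt ν x := fun y => (hmed' y).trans <| by
    simpa [min_eq_right (hmed o')] using min_depthPt_le_depthPt_midpoint ν o o'
  have hK : (ℝ ∙ (o' - o))ᗮ ≠ ⊤ := by
    simpa [Submodule.orthogonal_eq_top_iff, sub_eq_zero] using Ne.symm hne
  have hcount := one_le_finrank_mul_depthPt hK
    (minimalDirections_midpoint_subset_orthogonal (hmed x) (hmed' x))
    (zero_mem_convexHull_minimalDirections hνμ hx_med)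
  rw [finrank_euclideanSpace_fin] at hcount
  have hdepth : depthPt ν x < a := (le_ciSup ⟨_, forall_mem_range.2 hx_med⟩ x).trans_lt hsup
  have hd : (0 : ℝ) < d := by
    rcases Nat.eq_zero_or_pos d with rfl | hd
    · norm_num at hcount
    · exact_mod_cast hd
  rw [lt_div_iff₀ hd] at ha'
  nlinarith

theorem stmt7 (d : ℕ) (a : ℝ) (ha : 1 / (d + 1) < a) (ha' : a < 1 / d)
    (ν : Measure (EuclideanSpace ℝ (Fin d))) [IsProbabilityMeasure ν]
    (f : EuclideanSpace ℝ (Fin d) → ℝ)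
    (hf : Continuous f) (hfpos : ∀ x, 0 < f x)
    (hfdecay : ∃ C₁ C₂ : ℝ, 0 < C₁ ∧ 0 < C₂ ∧ ∀ x, f x < C₁ * Real.exp (-C₂ * ‖x‖))
    (hν : ν = volume.withDensity (fun x => ENNReal.ofReal (f x)))
    (hsup : (⨆ x, depthPt ν x) < a)
    (o o' : EuclideanSpace ℝ (Fin d))
    (hmed : ∀ x, depthPt ν x ≤ depthPt ν o)
    (hmed' : ∀ x, depthPt ν x ≤ depthPt ν o') :
    o = o' :=
  stmt7_general d a ha' ν f hf hfpos hν hsup o o' hmed hmed'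
end

section
/- Let ν be a Borel probability measure on ℝ^d with continuous positive density, and let B and B′ be d-dimensional simplicial cones with vertex at the origin such that max(ν(B), ν(B′)) ≤ 1/(d+1) + 1/(3(d+1)³) and ν(B ∩ B′) ≥ 1/(d+1) − (3d+2)/(3(d+1)³). Then B ⊇ C(B′) and B′ ⊇ C(B), where C(B) = ⋂{H ∩ B : H half-space, 0 ∈ ∂H, ν(H ∩ B) ≥ (d/(d+1))·ν(B)} is the central cone of B. -/
open MeasureTheory

/-- The central cone `C(B; ν)` of a cone `B`: the set of points of `B` lying in every
closed half-space `H` through the origin with `ν(H ∩ B) ≥ (d/(d+1))·ν(B)`. -/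
def centralCone (d : ℕ) (ν : Measure (EuclideanSpace ℝ (Fin d)))
    (B : Set (EuclideanSpace ℝ (Fin d))) : Set (EuclideanSpace ℝ (Fin d)) :=
  {x ∈ B | ∀ m : EuclideanSpace ℝ (Fin d), m ≠ 0 →
    (d / (d + 1) : ℝ) * (ν B).toReal ≤
      (ν ({y : EuclideanSpace ℝ (Fin d) | (inner ℝ m y : ℝ) ≤ 0} ∩ B)).toReal →
    (inner ℝ m x : ℝ) ≤ 0}

/-- `B` is a d-dimensional simplicial cone with vertex at the origin. -/
def IsSimplicialCone (d : ℕ) (B : Set (EuclideanSpace ℝ (Fin d))) : Prop :=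
  ∃ v : Fin d → EuclideanSpace ℝ (Fin d), LinearIndependent ℝ v ∧
    B = {x | ∃ c : Fin d → ℝ, (∀ i, 0 ≤ c i) ∧ x = ∑ i, c i • v i}

/-!
If `x ∈ C(B') \ B`, a facet hyperplane of the simplicial cone `B` separates `x` from `B`;
its half-space `H ⊇ B` satisfies `ν(H ∩ B') ≥ ν(B ∩ B') ≥ (d/(d+1)) ν(B')` by the measure
bounds, so `H` is one of the half-spaces cutting out `C(B')`, and `x ∈ H`: a contradiction.
-/

/-- A point outside the cone spanned by a basis has a negative coordinate `j`; minus the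
`j`-th coordinate functional, realised as an inner product, separates it from the cone. -/
theorem Module.Basis.exists_inner_pos_of_notMem_cone {ι E : Type*} [Fintype ι]
    [NormedAddCommGroup E] [InnerProductSpace ℝ E] [FiniteDimensional ℝ E] (b : Module.Basis ι ℝ E)
    {x : E} (hx : x ∉ {y | ∃ c : ι → ℝ, (∀ i, 0 ≤ c i) ∧ y = ∑ i, c i • b i}) :
    ∃ m : E, (∀ c : ι → ℝ, (∀ i, 0 ≤ c i) → inner ℝ m (∑ i, c i • b i) ≤ 0) ∧
      0 < inner ℝ m x := by
  obtain ⟨j, hj⟩ : ∃ j, b.repr x j < 0 := by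
    by_contra! h
    exact hx ⟨fun i => b.repr x i, h, (b.sum_repr x).symm⟩
  let m := (InnerProductSpace.toDual ℝ E).symm (-(b.coord j)).toContinuousLinearMap
  have hm : ∀ y, inner ℝ m y = -b.repr y j := fun y => by
    simp [m, InnerProductSpace.toDual_symm_apply]
  refine ⟨m, fun c hc => ?_, by rw [hm]; linarith⟩
  rw [hm, b.repr_sum_self]
  linarith [hc j]

theorem IsSimplicialCone.exists_inner_pos_of_notMem {d : ℕ} {B : Set (EuclideanSpace ℝ (Fin d))}
    (hB : IsSimplicialCone d B) {x : EuclideanSpace ℝ (Fin d)} (hx : x ∉ B) :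
    ∃ m : EuclideanSpace ℝ (Fin d), (∀ y ∈ B, inner ℝ m y ≤ 0) ∧ 0 < inner ℝ m x := by
  obtain ⟨v, hv, rfl⟩ := hB
  let b := basisOfLinearIndependentOfCardEqFinrank' v hv (by simp)
  have hb : ⇑b = v := by simp [b, basisOfLinearIndependentOfCardEqFinrank']
  rw [← hb] at hx
  obtain ⟨m, hmB, hmx⟩ := b.exists_inner_pos_of_notMem_cone hx
  exact ⟨m, by rintro _ ⟨c, hc, rfl⟩; rw [← hb]; exact hmB c hc, hmx⟩

theorem centralCone_subset_of_le_measure_inter {d : ℕ} {ν : Measure (EuclideanSpace ℝ (Fin d))}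
    [IsFiniteMeasure ν] {B B' : Set (EuclideanSpace ℝ (Fin d))} (hB : IsSimplicialCone d B)
    (h : (d / (d + 1) : ℝ) * (ν B').toReal ≤ (ν (B ∩ B')).toReal) :
    centralCone d ν B' ⊆ B := by
  rintro x ⟨-, hxC⟩
  by_contra hxB
  obtain ⟨m, hmB, hmx⟩ := hB.exists_inner_pos_of_notMem hxB
  have hm0 : m ≠ 0 := by rintro rfl; simp at hmx
  have hBH : B ∩ B' ⊆ {y | inner ℝ m y ≤ 0} ∩ B' := Set.inter_subset_inter_left _ hmB
  have := hxC m hm0 (h.trans (measureReal_mono hBH))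
  linarith

theorem succ_ratio_mul_upper_le_lower {n : ℝ} (hn : 0 ≤ n) :
    n / (n + 1) * (1 / (n + 1) + 1 / (3 * (n + 1) ^ 3)) ≤
      1 / (n + 1) - (3 * n + 2) / (3 * (n + 1) ^ 3) := by
  have hgap : 1 / (n + 1) - (3 * n + 2) / (3 * (n + 1) ^ 3) -
      n / (n + 1) * (1 / (n + 1) + 1 / (3 * (n + 1) ^ 3)) = 1 / (3 * (n + 1) ^ 4) := by
    field_simp
    ring
  have : 0 ≤ 1 / (3 * (n + 1) ^ 4) := by positivity
  linarith

theorem centralCone_subset_of_measure_bounds {d : ℕ} {ν : Measure (EuclideanSpace ℝ (Fin d))}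
    [IsFiniteMeasure ν] {B B' : Set (EuclideanSpace ℝ (Fin d))} (hB : IsSimplicialCone d B)
    (hB'le : (ν B').toReal ≤ 1 / (d + 1) + 1 / (3 * (d + 1) ^ 3))
    (hcap : 1 / (d + 1) - (3 * d + 2) / (3 * (d + 1) ^ 3) ≤ (ν (B ∩ B')).toReal) :
    centralCone d ν B' ⊆ B := by
  refine centralCone_subset_of_le_measure_inter hB ?_
  calc (d / (d + 1) : ℝ) * (ν B').toReal
      ≤ d / (d + 1) * (1 / (d + 1) + 1 / (3 * (d + 1) ^ 3)) := by gcongr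
    _ ≤ 1 / (d + 1) - (3 * d + 2) / (3 * (d + 1) ^ 3) :=
        succ_ratio_mul_upper_le_lower d.cast_nonneg
    _ ≤ (ν (B ∩ B')).toReal := hcap

theorem stmt11_general (d : ℕ) (ν : Measure (EuclideanSpace ℝ (Fin d))) [IsProbabilityMeasure ν]
    (B B' : Set (EuclideanSpace ℝ (Fin d)))
    (hB : IsSimplicialCone d B) (hB' : IsSimplicialCone d B')
    (hmax : max (ν B).toReal (ν B').toReal ≤ 1 / (d + 1) + 1 / (3 * (d + 1) ^ 3))
    (hcap : (ν (B ∩ B')).toReal ≥ 1 / (d + 1) - (3 * d + 2) / (3 * (d + 1) ^ 3)) :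
    centralCone d ν B' ⊆ B ∧ centralCone d ν B ⊆ B' := by
  obtain ⟨hBle, hB'le⟩ := max_le_iff.mp hmax
  exact ⟨centralCone_subset_of_measure_bounds hB hB'le hcap,
    centralCone_subset_of_measure_bounds hB' hBle (Set.inter_comm B B' ▸ hcap)⟩

theorem stmt11 (d : ℕ) (ν : Measure (EuclideanSpace ℝ (Fin d))) [IsProbabilityMeasure ν]
    (f : EuclideanSpace ℝ (Fin d) → ℝ)
    (hf : Continuous f) (hfpos : ∀ x, 0 < f x)
    (hν : ν = volume.withDensity (fun x => ENNReal.ofReal (f x)))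
    (B B' : Set (EuclideanSpace ℝ (Fin d)))
    (hB : IsSimplicialCone d B) (hB' : IsSimplicialCone d B')
    (hmax : max (ν B).toReal (ν B').toReal ≤ 1 / (d + 1) + 1 / (3 * (d + 1) ^ 3))
    (hcap : (ν (B ∩ B')).toReal ≥ 1 / (d + 1) - (3 * d + 2) / (3 * (d + 1) ^ 3)) :
    centralCone d ν B' ⊆ B ∧ centralCone d ν B ⊆ B' :=
  stmt11_general d ν B B' hB hB' hmax hcap
end

section
/- Rado Centerpoint Theorem: for every Borel probability measure μ on ℝ^d there exists a point x ∈ ℝ^d such that μ(H) ≥ 1/(d+1) for every closed half-space H containing x. -/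
/-!
Call a set heavy if its complement has measure less than `1/(d+1)`. By the union bound any
`d+1` heavy sets intersect, so by Helly's theorem any finitely many closed convex heavy sets
intersect; adding a heavy closed ball gives compactness, so all of them share a point `x`. A
closed half-space `{f ≤ c}` of measure less than `1/(d+1)` is, by continuity of measure, the
complement of some smaller heavy half-space `{r ≤ f}` with `c < r`, which `x` then lies in; hence
`x` is not in `{f ≤ c}`.
-/

open MeasureTheory Set Filter Topology Module
open scoped ENNReal Finset

section

variable {α : Type*} [MeasurableSpace α] (μ : Measure α)

lemma nonempty_biInter_of_measure_compl_lt [IsProbabilityMeasure μ] {ι : Type*}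
    {F : ι → Set α} {s : Finset ι} {n : ℕ} (hs : #s ≤ n + 1)
    (h : ∀ i ∈ s, μ (F i)ᶜ < ((n : ℝ≥0∞) + 1)⁻¹) : (⋂ i ∈ s, F i).Nonempty := by
  rcases s.eq_empty_or_nonempty with rfl | hne
  · have := nonempty_of_isProbabilityMeasure μ
    simp
  by_contra hempty
  have hcover : ⋃ i ∈ s, (F i)ᶜ = univ := by
    rw [← compl_iInter₂, not_nonempty_iff_eq_empty.1 hempty, compl_empty]
  refine lt_irrefl (1 : ℝ≥0∞) ?_
  calc 1 = μ (⋃ i ∈ s, (F i)ᶜ) := by rw [hcover, measure_univ]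
    _ ≤ ∑ i ∈ s, μ (F i)ᶜ := measure_biUnion_finset_le s _
    _ < ∑ _i ∈ s, ((n : ℝ≥0∞) + 1)⁻¹ := ENNReal.sum_lt_sum_of_nonempty hne h
    _ = #s * ((n : ℝ≥0∞) + 1)⁻¹ := by rw [Finset.sum_const, nsmul_eq_mul]
    _ ≤ ((n : ℝ≥0∞) + 1) * ((n : ℝ≥0∞) + 1)⁻¹ := by gcongr; exact_mod_cast hs
    _ = 1 := ENNReal.mul_inv_cancel (by positivity) (by simp)

lemma exists_gt_measure_setOf_lt_lt [IsFiniteMeasure μ] {f : α → ℝ} (hf : Measurable f)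
    {c : ℝ} {t : ℝ≥0∞} (h : μ {y | f y ≤ c} < t) : ∃ r > c, μ {y | f y < r} < t := by
  have hset : ⋂ r > c, {y | f y < r} = {y | f y ≤ c} := by
    ext y
    simpa using forall_gt_iff_le
  have hlim : Tendsto (fun r => μ {y | f y < r}) (𝓝[>] c) (𝓝 (μ {y | f y ≤ c})) := by
    rw [← hset]
    exact tendsto_measure_biInter_gt
      (fun r _ => (measurableSet_lt hf measurable_const).nullMeasurableSet)
      (fun _ _ _ hij _ hy => lt_of_lt_of_le hy hij) ⟨c + 1, by simp, measure_ne_top _ _⟩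
  exact ((hlim.eventually (gt_mem_nhds h)).and self_mem_nhdsWithin).exists.imp
    fun r hr => ⟨hr.2, hr.1⟩

lemma exists_measure_compl_closedBall_lt [PseudoMetricSpace α] [OpensMeasurableSpace α]
    [IsFiniteMeasure μ] (x : α) {ε : ℝ≥0∞} (hε : 0 < ε) :
    ∃ R : ℝ, μ (Metric.closedBall x R)ᶜ < ε := by
  have hlim : Tendsto (fun n : ℕ => μ (Metric.closedBall x n)ᶜ) atTop (𝓝 0) := by
    have hempty : ⋂ n : ℕ, (Metric.closedBall x n)ᶜ = ∅ := by
      rw [← compl_iUnion, Metric.iUnion_closedBall_nat, compl_univ]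
    rw [← measure_empty (μ := μ), ← hempty]
    exact tendsto_measure_iInter_atTop
      (fun n => measurableSet_closedBall.compl.nullMeasurableSet)
      (fun m n hmn => compl_subset_compl.2 <|
        Metric.closedBall_subset_closedBall (Nat.cast_le.2 hmn))
      ⟨0, measure_ne_top _ _⟩
  obtain ⟨n, hn⟩ := (hlim.eventually (gt_mem_nhds hε)).exists
  exact ⟨n, hn⟩

end

section

variable {𝕜 E ι : Type*} [MeasurableSpace E] (μ : Measure E) [IsProbabilityMeasure μ]

lemma nonempty_biInter_of_convex_of_measure_compl_lt [Field 𝕜] [LinearOrder 𝕜]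
    [IsStrictOrderedRing 𝕜] [AddCommGroup E] [Module 𝕜 E] [FiniteDimensional 𝕜 E]
    {F : ι → Set E} {s : Finset ι} (hconv : ∀ i ∈ s, Convex 𝕜 (F i))
    (h : ∀ i ∈ s, μ (F i)ᶜ < ((finrank 𝕜 E : ℝ≥0∞) + 1)⁻¹) : (⋂ i ∈ s, F i).Nonempty :=
  Convex.helly_theorem' hconv fun _I hI hcard =>
    nonempty_biInter_of_measure_compl_lt μ hcard fun i hi => h i (hI hi)

variable [NormedAddCommGroup E] [NormedSpace ℝ E] [FiniteDimensional ℝ E]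
  [OpensMeasurableSpace E]

theorem nonempty_iInter_of_isClosed_of_convex_of_measure_compl_lt {F : ι → Set E}
    (hclosed : ∀ i, IsClosed (F i)) (hconv : ∀ i, Convex ℝ (F i))
    (h : ∀ i, μ (F i)ᶜ < ((finrank ℝ E : ℝ≥0∞) + 1)⁻¹) : (⋂ i, F i).Nonempty := by
  classical
  -- A heavy closed ball joins the family: Helly still applies, and it brings compactness.
  obtain ⟨R, hR⟩ := exists_measure_compl_closedBall_lt μ (0 : E)
    (by simp : (0 : ℝ≥0∞) < ((finrank ℝ E : ℝ≥0∞) + 1)⁻¹)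
  let G : Option ι → Set E := fun o => o.elim (Metric.closedBall 0 R) F
  have hfin : ∀ u : Finset ι, (Metric.closedBall 0 R ∩ ⋂ i ∈ u, F i).Nonempty := by
    intro u
    have := nonempty_biInter_of_convex_of_measure_compl_lt μ (F := G)
      (s := insert none (u.map Function.Embedding.some))
      (by rintro (_ | i) -; exacts [convex_closedBall _ _, hconv i])
      (by rintro (_ | i) -; exacts [hR, h i])
    simpa [G] using this
  exact ((isCompact_closedBall 0 R).inter_iInter_nonempty F hclosed hfin).mono inter_subset_right

theorem exists_forall_measure_halfSpace_ge : ∃ x : E, ∀ (f : StrongDual ℝ E) (c : ℝ),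
    f x ≤ c → ((finrank ℝ E : ℝ≥0∞) + 1)⁻¹ ≤ μ {y | f y ≤ c} := by
  let ι := {p : StrongDual ℝ E × ℝ // μ {y | p.1 y < p.2} < ((finrank ℝ E : ℝ≥0∞) + 1)⁻¹}
  obtain ⟨x, hx⟩ := nonempty_iInter_of_isClosed_of_convex_of_measure_compl_lt μ
    (F := fun p : ι => {y | p.1.2 ≤ p.1.1 y})
    (fun p => isClosed_le continuous_const p.1.1.continuous)
    (fun p => convex_halfSpace_ge (p.1.1 : E →ₗ[ℝ] ℝ).isLinear _)
    (fun p => by simpa only [compl_ofPred, not_le] using p.2)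
  refine ⟨x, fun f c hxc => le_of_not_gt fun hlt => ?_⟩
  obtain ⟨r, hcr, hr⟩ := exists_gt_measure_setOf_lt_lt μ f.continuous.measurable hlt
  have hrx : r ≤ f x := mem_iInter.1 hx ⟨(f, r), hr⟩
  linarith

end

/-- The Rado Centerpoint Theorem: every Borel probability measure on ℝ^d admits a point
all of whose containing closed half-spaces have measure at least 1/(d+1). -/
theorem stmt15 (d : ℕ) (μ : Measure (EuclideanSpace ℝ (Fin d))) [IsProbabilityMeasure μ] :
    ∃ x : EuclideanSpace ℝ (Fin d),
      ∀ (v : EuclideanSpace ℝ (Fin d)) (c : ℝ), v ≠ 0 → (inner ℝ v x : ℝ) ≤ c →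
        (μ {y : EuclideanSpace ℝ (Fin d) | (inner ℝ v y : ℝ) ≤ c}).toReal ≥ 1 / (d + 1) := by
  obtain ⟨x, hx⟩ := exists_forall_measure_halfSpace_ge μ
  refine ⟨x, fun v c _ hvc => ?_⟩
  have hμ := ENNReal.toReal_mono (measure_ne_top _ _) (hx (innerSL ℝ v) c hvc)
  rw [finrank_euclideanSpace_fin] at hμ
  rwa [ENNReal.toReal_inv, ENNReal.toReal_add (ENNReal.natCast_ne_top d) ENNReal.one_ne_top,
    ENNReal.toReal_natCast, ENNReal.toReal_one, ← one_div] at hμ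
end
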